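/- For every real s > 1, the Witten zeta series ζ_{C_r}(s) = Σ_{λ ∈ Λ_r^C} (d_λ^C)^{−s} converges for every integer r ≥ 1, and lim_{r→∞} ζ_{C_r}(s) = 1. -/

import Mathlib

open Filter

/-- The dimension `d_λ^C = ∏_{1≤i<j≤r} (λ_i - λ_j + j - i)/(j - i) ·
∏_{1≤i≤j≤r} (λ_i + λ_j + 2r + 2 - i - j)/(2r + 2 - i - j)` of the irreducible
representation of `Sp(r)` with highest weight `λ` (indices here are 0-based). -/
noncomputable def dimC (r : ℕ) (lam : Fin r → ℕ) : ℝ :=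
  (∏ i : Fin r, ∏ j ∈ Finset.Ioi i,
      (((lam i : ℝ) - (lam j : ℝ) + ((j : ℕ) : ℝ) - ((i : ℕ) : ℝ)) /
        (((j : ℕ) : ℝ) - ((i : ℕ) : ℝ)))) *
    ∏ i : Fin r, ∏ j ∈ Finset.Ici i,
      (((lam i : ℝ) + (lam j : ℝ) + 2 * (r : ℝ) + 2 - (((i : ℕ) : ℝ) + 1) -
          (((j : ℕ) : ℝ) + 1)) /
        (2 * (r : ℝ) + 2 - (((i : ℕ) : ℝ) + 1) - (((j : ℕ) : ℝ) + 1)))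

open Finset

namespace WittenAux

noncomputable def p1 (r : ℕ) (lam : Fin r → ℕ) : ℝ :=
  ∏ i : Fin r, ∏ j ∈ Finset.Ioi i,
      (((lam i : ℝ) - (lam j : ℝ) + ((j : ℕ) : ℝ) - ((i : ℕ) : ℝ)) /
        (((j : ℕ) : ℝ) - ((i : ℕ) : ℝ)))

noncomputable def p2 (r : ℕ) (lam : Fin r → ℕ) : ℝ :=
  ∏ i : Fin r, ∏ j ∈ Finset.Ici i,
      (((lam i : ℝ) + (lam j : ℝ) + 2 * (r : ℝ) + 2 - (((i : ℕ) : ℝ) + 1) -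
          (((j : ℕ) : ℝ) + 1)) /
        (2 * (r : ℝ) + 2 - (((i : ℕ) : ℝ) + 1) - (((j : ℕ) : ℝ) + 1)))

variable {r : ℕ} {lam : Fin r → ℕ}

lemma den1_pos {i j : Fin r} (h : i < j) : (0:ℝ) < ((j : ℕ) : ℝ) - ((i : ℕ) : ℝ) := by
  have : (i : ℕ) < (j : ℕ) := h
  have : ((i : ℕ) : ℝ) < ((j : ℕ) : ℝ) := by exact_mod_cast this
  linarith

lemma fac1_ge_one (hl : Antitone lam) {i j : Fin r} (h : i < j) :
    1 ≤ ((lam i : ℝ) - (lam j : ℝ) + ((j : ℕ) : ℝ) - ((i : ℕ) : ℝ)) /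
        (((j : ℕ) : ℝ) - ((i : ℕ) : ℝ)) := by
  have hd := den1_pos h
  rw [le_div_iff₀ hd]
  have : (lam j : ℝ) ≤ (lam i : ℝ) := by exact_mod_cast hl h.le
  linarith

lemma den2_pos (i j : Fin r) :
    (0:ℝ) < 2 * (r : ℝ) + 2 - (((i : ℕ) : ℝ) + 1) - (((j : ℕ) : ℝ) + 1) := by
  have hi : ((i : ℕ) : ℝ) + 1 ≤ (r : ℝ) := by exact_mod_cast i.isLt
  have hj : ((j : ℕ) : ℝ) + 1 ≤ (r : ℝ) := by exact_mod_cast j.isLt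
  linarith

lemma den2_le (i j : Fin r) :
    2 * (r : ℝ) + 2 - (((i : ℕ) : ℝ) + 1) - (((j : ℕ) : ℝ) + 1) ≤ 2 * (r : ℝ) := by
  have hi : (0:ℝ) ≤ ((i : ℕ) : ℝ) := Nat.cast_nonneg _
  have hj : (0:ℝ) ≤ ((j : ℕ) : ℝ) := Nat.cast_nonneg _
  linarith

lemma fac2_ge_one (i j : Fin r) :
    1 ≤ ((lam i : ℝ) + (lam j : ℝ) + 2 * (r : ℝ) + 2 - (((i : ℕ) : ℝ) + 1) -
          (((j : ℕ) : ℝ) + 1)) /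
        (2 * (r : ℝ) + 2 - (((i : ℕ) : ℝ) + 1) - (((j : ℕ) : ℝ) + 1)) := by
  rw [le_div_iff₀ (den2_pos i j)]
  have h1 : (0:ℝ) ≤ (lam i : ℝ) := Nat.cast_nonneg _
  have h2 : (0:ℝ) ≤ (lam j : ℝ) := Nat.cast_nonneg _
  linarith

lemma fac2_ge_row (i j : Fin r) :
    1 + (lam i : ℝ) / (2 * (r:ℝ)) ≤
      ((lam i : ℝ) + (lam j : ℝ) + 2 * (r : ℝ) + 2 - (((i : ℕ) : ℝ) + 1) -
          (((j : ℕ) : ℝ) + 1)) /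
        (2 * (r : ℝ) + 2 - (((i : ℕ) : ℝ) + 1) - (((j : ℕ) : ℝ) + 1)) := by
  have hD := den2_pos i j
  have hD2 := den2_le i j
  have hr : (0:ℝ) < 2 * (r:ℝ) := lt_of_lt_of_le hD hD2
  have heq : 1 + (lam i : ℝ) / (2 * (r:ℝ)) = (2 * (r:ℝ) + (lam i : ℝ)) / (2 * (r:ℝ)) := by
    rw [add_div, div_self hr.ne']
  rw [heq, div_le_div_iff₀ hr hD]
  have h1 : (0:ℝ) ≤ (lam i : ℝ) := Nat.cast_nonneg _
  have h2 : (0:ℝ) ≤ (lam j : ℝ) := Nat.cast_nonneg _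
  nlinarith [mul_le_mul_of_nonneg_left hD2 h1]

lemma fac2_ge_col (i j : Fin r) :
    1 + (lam j : ℝ) / (2 * (r:ℝ)) ≤
      ((lam i : ℝ) + (lam j : ℝ) + 2 * (r : ℝ) + 2 - (((i : ℕ) : ℝ) + 1) -
          (((j : ℕ) : ℝ) + 1)) /
        (2 * (r : ℝ) + 2 - (((i : ℕ) : ℝ) + 1) - (((j : ℕ) : ℝ) + 1)) := by
  have hD := den2_pos i j
  have hD2 := den2_le i j
  have hr : (0:ℝ) < 2 * (r:ℝ) := lt_of_lt_of_le hD hD2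
  have heq : 1 + (lam j : ℝ) / (2 * (r:ℝ)) = (2 * (r:ℝ) + (lam j : ℝ)) / (2 * (r:ℝ)) := by
    rw [add_div, div_self hr.ne']
  rw [heq, div_le_div_iff₀ hr hD]
  have h1 : (0:ℝ) ≤ (lam i : ℝ) := Nat.cast_nonneg _
  have h2 : (0:ℝ) ≤ (lam j : ℝ) := Nat.cast_nonneg _
  nlinarith [mul_le_mul_of_nonneg_left hD2 h2]

lemma one_le_prod_aux {α : Type*} (S : Finset α) (f : α → ℝ) (h : ∀ a ∈ S, 1 ≤ f a) :
    1 ≤ ∏ a ∈ S, f a := by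
  calc (1:ℝ) = ∏ _a ∈ S, 1 := by simp
  _ ≤ ∏ a ∈ S, f a := Finset.prod_le_prod (fun a _ => zero_le_one) h

lemma single_le_prod_aux {α : Type*} (S : Finset α) (f : α → ℝ) (h : ∀ a ∈ S, 1 ≤ f a)
    {a : α} (ha : a ∈ S) : f a ≤ ∏ b ∈ S, f b := by
  classical
  rw [← Finset.prod_erase_mul S f ha]
  calc f a = 1 * f a := by ring
  _ ≤ (∏ b ∈ S.erase a, f b) * f a := by
      apply mul_le_mul_of_nonneg_right
        (one_le_prod_aux _ _ (fun b hb => h b (Finset.mem_of_mem_erase hb)))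
      linarith [h a ha]

lemma one_le_p1 (hl : Antitone lam) : 1 ≤ p1 r lam := by
  unfold p1
  apply one_le_prod_aux
  intro i _
  apply one_le_prod_aux
  intro j hj
  exact fac1_ge_one hl (Finset.mem_Ioi.mp hj)

lemma one_le_p2 : 1 ≤ p2 r lam := by
  unfold p2
  apply one_le_prod_aux
  intro i _
  apply one_le_prod_aux
  intro j _
  exact fac2_ge_one i j

lemma p2_ge_row :
    ∏ i : Fin r, (1 + (lam i : ℝ) / (2 * (r:ℝ))) ^ (r - (i:ℕ)) ≤ p2 r lam := by
  have : ∀ i : Fin r, (1 + (lam i : ℝ) / (2 * (r:ℝ))) ^ (r - (i:ℕ))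
      = ∏ _j ∈ Finset.Ici i, (1 + (lam i : ℝ) / (2 * (r:ℝ))) := by
    intro i; rw [Finset.prod_const, Fin.card_Ici]
  rw [Finset.prod_congr rfl (fun i _ => this i)]
  apply Finset.prod_le_prod
  · intro i _
    apply Finset.prod_nonneg
    intro j _
    positivity
  · intro i _
    apply Finset.prod_le_prod
    · intro j _; positivity
    · intro j _; exact fac2_ge_row i j

lemma p2_ge_col :
    ∏ i : Fin r, (1 + (lam i : ℝ) / (2 * (r:ℝ))) ^ ((i:ℕ) + 1) ≤ p2 r lam := by
  have key : ∏ i : Fin r, ∏ j ∈ Finset.Ici i, (1 + (lam j : ℝ) / (2 * (r:ℝ)))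
      = ∏ j : Fin r, (1 + (lam j : ℝ) / (2 * (r:ℝ))) ^ ((j:ℕ) + 1) := by
    rw [Finset.prod_comm' (t' := Finset.univ) (s' := fun j => Finset.Iic j)
      (by intro i j; simp [Finset.mem_Ici, Finset.mem_Iic])]
    exact Finset.prod_congr rfl fun j _ => by rw [Finset.prod_const, Fin.card_Iic]
  rw [← key]
  apply Finset.prod_le_prod
  · intro i _
    apply Finset.prod_nonneg
    intro j _
    positivity
  · intro i _
    apply Finset.prod_le_prod
    · intro j _; positivity
    · intro j _; exact fac2_ge_col i j

lemma p1_pos (hl : Antitone lam) : 0 < p1 r lam := lt_of_lt_of_le one_pos (one_le_p1 hl)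
lemma p2_pos : 0 < p2 r lam := lt_of_lt_of_le one_pos one_le_p2

lemma dimC_eq : dimC r lam = p1 r lam * p2 r lam := rfl

lemma dimC_pos (hl : Antitone lam) : 0 < dimC r lam := by
  rw [dimC_eq]; exact mul_pos (p1_pos hl) p2_pos

lemma one_le_dimC (hl : Antitone lam) : 1 ≤ dimC r lam := by
  rw [dimC_eq]
  calc (1:ℝ) ≤ p2 r lam := one_le_p2
  _ = 1 * p2 r lam := by ring
  _ ≤ p1 r lam * p2 r lam := mul_le_mul_of_nonneg_right (one_le_p1 hl) p2_pos.le

noncomputable def W (r : ℕ) (lam : Fin r → ℕ) : ℝ :=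
  ∏ i : Fin r, (1 + (lam i : ℝ) / (2 * (r:ℝ))) ^ (r + 1)

lemma W_nonneg : 0 ≤ W r lam := by
  apply Finset.prod_nonneg; intro i _; positivity

lemma dimC_sq_ge (hl : Antitone lam) : W r lam ≤ (dimC r lam) ^ 2 := by
  have hsplit : W r lam =
      (∏ i : Fin r, (1 + (lam i : ℝ) / (2 * (r:ℝ))) ^ (r - (i:ℕ))) *
      (∏ i : Fin r, (1 + (lam i : ℝ) / (2 * (r:ℝ))) ^ ((i:ℕ) + 1)) := by
    rw [← Finset.prod_mul_distrib]
    apply Finset.prod_congr rfl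
    intro i _
    rw [← pow_add]
    congr 1
    have := i.isLt
    omega
  have h1 : ∏ i : Fin r, (1 + (lam i : ℝ) / (2 * (r:ℝ))) ^ (r - (i:ℕ)) ≤ dimC r lam := by
    calc _ ≤ p2 r lam := p2_ge_row
    _ = 1 * p2 r lam := by ring
    _ ≤ p1 r lam * p2 r lam := by
        apply mul_le_mul_of_nonneg_right (one_le_p1 hl) p2_pos.le
    _ = dimC r lam := dimC_eq.symm
  have h2 : ∏ i : Fin r, (1 + (lam i : ℝ) / (2 * (r:ℝ))) ^ ((i:ℕ) + 1) ≤ dimC r lam := by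
    calc _ ≤ p2 r lam := p2_ge_col
    _ = 1 * p2 r lam := by ring
    _ ≤ p1 r lam * p2 r lam := by
        apply mul_le_mul_of_nonneg_right (one_le_p1 hl) p2_pos.le
    _ = dimC r lam := dimC_eq.symm
  rw [hsplit, sq]
  apply mul_le_mul h1 h2 (Finset.prod_nonneg fun i _ => by positivity) (dimC_pos hl).le

lemma dimC_zero : dimC r (fun _ => 0) = 1 := by
  rw [dimC_eq]
  have h1 : p1 r (fun _ => 0) = 1 := by
    apply Finset.prod_eq_one
    intro i _
    apply Finset.prod_eq_one
    intro j hj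
    simp only [Nat.cast_zero]
    rw [sub_zero, zero_add]  -- may need adjusting
    exact div_self (ne_of_gt (den1_pos (Finset.mem_Ioi.mp hj)))
  have h2 : p2 r (fun _ => 0) = 1 := by
    apply Finset.prod_eq_one
    intro i _
    apply Finset.prod_eq_one
    intro j _
    simp only [Nat.cast_zero]
    rw [add_zero, zero_add]
    exact div_self (ne_of_gt (den2_pos i j))
  rw [h1, h2, mul_one]

end WittenAux

section C2
variable {r : ℕ} {lam : Fin r → ℕ}

/-- the per-coordinate comparison weight -/
noncomputable def xF (r : ℕ) (σ : ℝ) (v : ℕ) : ℝ :=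
  ((1 + (v : ℝ) / (2 * (r:ℝ))) ^ (r + 1)) ^ (-(σ / 2))

lemma xF_nonneg (σ : ℝ) (v : ℕ) : 0 ≤ xF r σ v := Real.rpow_nonneg (by positivity) _

lemma xF_zero (σ : ℝ) : xF r σ 0 = 1 := by
  unfold xF
  norm_num

lemma base_pos (v : ℕ) : (0:ℝ) < (1 + (v : ℝ) / (2 * (r:ℝ))) ^ (r + 1) := by positivity

-- quadratic lower bound on the base
lemma base_ge_quad (hr : 1 ≤ r) (v : ℕ) :
    (v:ℝ) ^ 2 / 8 ≤ (1 + (v : ℝ) / (2 * (r:ℝ))) ^ (r + 1) := by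
  have hR : (1:ℝ) ≤ (r:ℝ) := by exact_mod_cast hr
  have hRpos : (0:ℝ) < (r:ℝ) := by linarith
  set x : ℝ := (v : ℝ) / (2 * (r:ℝ)) with hx
  have hxnn : 0 ≤ x := by positivity
  have hbin : ((r+1).choose 2 : ℝ) * x ^ 2 ≤ (1 + x) ^ (r + 1) := by
    have := add_pow (1:ℝ) x (r+1)
    rw [show ((1:ℝ) + x) = (x + 1) by ring] at *
    have hexp : (x + 1) ^ (r + 1) = ∑ k ∈ Finset.range (r + 2), x ^ k * ((r+1).choose k : ℝ) := by
      rw [add_pow]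
      apply Finset.sum_congr rfl
      intro k _
      rw [one_pow]
      ring
    rw [hexp]
    have h2mem : 2 ∈ Finset.range (r + 2) := by
      simp only [Finset.mem_range]; omega
    have := Finset.single_le_sum (f := fun k => x ^ k * ((r+1).choose k : ℝ))
      (fun k _ => by positivity) h2mem
    calc ((r+1).choose 2 : ℝ) * x ^ 2 = x ^ 2 * ((r+1).choose 2 : ℝ) := by ring
    _ ≤ _ := this
  have hch : ((r+1).choose 2 : ℝ) = ((r:ℝ) + 1) * (r:ℝ) / 2 := by
    rw [Nat.cast_choose_two]
    push_cast
    ring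
  have hxval : ((r+1).choose 2 : ℝ) * x ^ 2 = (v:ℝ)^2 * (((r:ℝ)+1) / (r:ℝ)) / 8 := by
    rw [hch, hx]
    field_simp
    ring
  have hfrac : (1:ℝ) ≤ ((r:ℝ)+1) / (r:ℝ) := by
    rw [le_div_iff₀ hRpos]; linarith
  calc (v:ℝ)^2 / 8 = (v:ℝ)^2 * 1 / 8 := by ring
  _ ≤ (v:ℝ)^2 * (((r:ℝ)+1) / (r:ℝ)) / 8 := by
      have : (0:ℝ) ≤ (v:ℝ)^2 := by positivity
      nlinarith
  _ = ((r+1).choose 2 : ℝ) * x ^ 2 := hxval.symm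
  _ ≤ _ := hbin

lemma base_ge_32 (hr : 1 ≤ r) {v : ℕ} (hv : 1 ≤ v) :
    (3/2 : ℝ) ≤ (1 + (v : ℝ) / (2 * (r:ℝ))) ^ (r + 1) := by
  have hR : (1:ℝ) ≤ (r:ℝ) := by exact_mod_cast hr
  have hRpos : (0:ℝ) < (r:ℝ) := by linarith
  set x : ℝ := (v : ℝ) / (2 * (r:ℝ)) with hx
  have hxnn : 0 ≤ x := by positivity
  have hb : 1 + ((r:ℕ)+1) * x ≤ (1 + x) ^ (r + 1) := by
    have := one_add_mul_le_pow (a := x) (by linarith) (r+1)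
    calc 1 + ((r:ℕ)+1) * x = 1 + ((r+1 : ℕ) : ℝ) * x := by push_cast; ring
    _ ≤ (1+x)^(r+1) := this
  have hxlb : 1 / (2 * (r:ℝ)) ≤ x := by
    rw [hx]
    apply div_le_div_of_nonneg_right _ (by linarith)
    · exact_mod_cast hv
  have : (3/2 : ℝ) ≤ 1 + ((r:ℕ)+1) * x := by
    have h1 : ((r:ℝ)+1) * (1 / (2*(r:ℝ))) ≤ ((r:ℝ)+1) * x := by
      apply mul_le_mul_of_nonneg_left hxlb (by linarith)
    have h2 : (1/2 : ℝ) ≤ ((r:ℝ)+1) * (1 / (2*(r:ℝ))) := by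
      rw [mul_one_div, le_div_iff₀ (by linarith)]
      linarith
    push_cast
    linarith
  calc (3/2:ℝ) ≤ 1 + ((r:ℕ)+1) * x := this
  _ ≤ _ := hb

lemma xF_le_56 (hr : 1 ≤ r) {σ : ℝ} (hσ : 1 ≤ σ) {v : ℕ} (hv : 1 ≤ v) :
    xF r σ v ≤ 5/6 := by
  have h1 : xF r σ v ≤ (3/2 : ℝ) ^ (-(σ/2)) :=
    Real.rpow_le_rpow_of_nonpos (by norm_num) (base_ge_32 hr hv) (by linarith)
  have h2 : (3/2 : ℝ) ^ (-(σ/2)) ≤ (3/2 : ℝ) ^ (-(1/2) : ℝ) :=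
    Real.rpow_le_rpow_of_exponent_le (by norm_num) (by linarith)
  have h3 : (3/2 : ℝ) ^ (-(1/2) : ℝ) ≤ 5/6 := by
    rw [Real.rpow_neg (by norm_num)]
    rw [show ((1:ℝ)/2) = 1/(2:ℝ) by norm_num, ← Real.sqrt_eq_rpow]
    have h65 : (6/5 : ℝ) ≤ Real.sqrt (3/2) := by
      rw [Real.le_sqrt (by norm_num) (by norm_num)]
      norm_num
    have hpos : (0:ℝ) < 6/5 := by norm_num
    calc (Real.sqrt (3/2))⁻¹ ≤ (6/5 : ℝ)⁻¹ := by
          apply inv_anti₀ hpos h65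
    _ = 5/6 := by norm_num
  linarith

end C2

section C2b
variable {r : ℕ}

lemma xF_decay (hr : 1 ≤ r) {σ : ℝ} (hσ : 0 < σ) {v : ℕ} (hv : 1 ≤ v) :
    xF r σ v ≤ (8:ℝ) ^ (σ/2) * (v:ℝ) ^ (-σ) := by
  have hv1 : (1:ℝ) ≤ (v:ℝ) := by exact_mod_cast hv
  have hq : (0:ℝ) < (v:ℝ)^2/8 := by positivity
  have h1 : xF r σ v ≤ ((v:ℝ)^2/8) ^ (-(σ/2)) :=
    Real.rpow_le_rpow_of_nonpos hq (base_ge_quad hr v) (by linarith)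
  have h2 : ((v:ℝ)^2/8 : ℝ) ^ (-(σ/2)) = (8:ℝ) ^ (σ/2) * (v:ℝ) ^ (-σ) := by
    rw [Real.div_rpow (by positivity) (by norm_num)]
    rw [← Real.rpow_natCast (v:ℝ) 2, ← Real.rpow_mul (by positivity)]
    rw [Real.rpow_neg (by norm_num : (0:ℝ) ≤ 8)]
    rw [show ((2:ℕ):ℝ) * (-(σ/2)) = -σ by push_cast; ring]
    field_simp
  linarith [h2 ▸ h1]

end C2b


section C3
open WittenAux
variable {r : ℕ} {lam : Fin r → ℕ}

lemma W_pos : 0 < WittenAux.W r lam := by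
  apply Finset.prod_pos; intro i _; positivity

lemma dimC_rpow_le (hr : 1 ≤ r) (hl : Antitone lam) {σ : ℝ} (hσ : 0 < σ) :
    dimC r lam ^ (-σ) ≤ ∏ i : Fin r, xF r σ (lam i) := by
  have hd := dimC_pos hl
  have h1 : dimC r lam ^ (-σ) = ((dimC r lam) ^ 2) ^ (-(σ/2)) := by
    rw [← Real.rpow_natCast (dimC r lam) 2, ← Real.rpow_mul hd.le]
    norm_num
    rw [show -(2 * (σ / 2)) = -σ by ring]
  have h2 : ((dimC r lam) ^ 2) ^ (-(σ/2)) ≤ (WittenAux.W r lam) ^ (-(σ/2)) :=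
    Real.rpow_le_rpow_of_nonpos W_pos (dimC_sq_ge hl) (by linarith)
  have h3 : (WittenAux.W r lam) ^ (-(σ/2)) = ∏ i : Fin r, xF r σ (lam i) := by
    unfold WittenAux.W xF
    rw [← Real.finset_prod_rpow _ _ (fun i _ => by positivity)]
  rw [h1]
  rw [h3] at h2
  exact h2

end C3

section Inj
variable {r : ℕ}

lemma mem_iff_lt_card (T : Finset (Fin r))
    (hT : ∀ ⦃i j : Fin r⦄, i ≤ j → j ∈ T → i ∈ T) (i : Fin r) :
    i ∈ T ↔ (i : ℕ) < T.card := by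
  constructor
  · intro hi
    have hsub : Finset.Iic i ⊆ T := fun j hj => hT (Finset.mem_Iic.mp hj) hi
    have := Finset.card_le_card hsub
    rw [Fin.card_Iic] at this
    omega
  · intro hi
    by_contra hni
    have hsub : T ⊆ Finset.Iio i := by
      intro j hj
      rw [Finset.mem_Iio]
      by_contra h'
      exact hni (hT (le_of_not_gt h') hj)
    have := Finset.card_le_card hsub
    rw [Fin.card_Iio] at this
    omega

lemma count_ge_eq_sum {V : ℕ} (f : Fin r → ℕ) (hfV : ∀ i, f i ≤ V) (v : ℕ) (hv : 1 ≤ v) :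
    #(univ.filter fun i => v ≤ f i) = ∑ u ∈ Finset.Icc v V, #(univ.filter fun i => f i = u) := by
  rw [Finset.card_eq_sum_card_fiberwise
    (f := f) (t := Finset.Icc v V)
    (fun i hi => Finset.mem_Icc.mpr ⟨(Finset.mem_filter.mp hi).2, hfV i⟩)]
  apply Finset.sum_congr rfl
  intro u hu
  congr 1
  ext i
  simp only [Finset.mem_filter, Finset.mem_univ, true_and]
  constructor
  · rintro ⟨_, h2⟩; exact h2
  · intro h; exact ⟨h ▸ (Finset.mem_Icc.mp hu).1, h⟩

lemma antitone_eq_of_cnt {V : ℕ} (f g : Fin r → ℕ) (hf : Antitone f) (hg : Antitone g)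
    (hfV : ∀ i, f i ≤ V) (hgV : ∀ i, g i ≤ V)
    (h : ∀ v, 1 ≤ v → v ≤ V →
      #(univ.filter fun i => f i = v) = #(univ.filter fun i => g i = v)) : f = g := by
  have hN : ∀ v, 1 ≤ v →
      #(univ.filter fun i => v ≤ f i) = #(univ.filter fun i => v ≤ g i) := by
    intro v hv
    rw [count_ge_eq_sum f hfV v hv, count_ge_eq_sum g hgV v hv]
    exact Finset.sum_congr rfl fun u hu =>
      h u (le_trans hv (Finset.mem_Icc.mp hu).1) (Finset.mem_Icc.mp hu).2
  have hdc : ∀ (f : Fin r → ℕ), Antitone f → ∀ (v : ℕ) (i : Fin r),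
      v ≤ f i ↔ (i : ℕ) < #(univ.filter fun i' => v ≤ f i') := by
    intro f hf v i
    have := mem_iff_lt_card (univ.filter fun i' => v ≤ f i')
      (fun a b hab hb => by
        simp only [Finset.mem_filter, Finset.mem_univ, true_and] at *
        exact le_trans hb (hf hab)) i
    simpa using this
  funext i
  have key : ∀ v, 1 ≤ v → (v ≤ f i ↔ v ≤ g i) := by
    intro v hv
    rw [hdc f hf v i, hdc g hg v i, hN v hv]
  apply le_antisymm
  · rcases Nat.eq_zero_or_pos (f i) with h0 | h0
    · omega
    · exact (key (f i) h0).mp le_rfl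
  · rcases Nat.eq_zero_or_pos (g i) with h0 | h0
    · omega
    · exact (key (g i) h0).mpr le_rfl

end Inj

section SumBound
open Finset
variable {r : ℕ}
set_option maxHeartbeats 1000000

lemma geom_fin_le {x : ℝ} (hx0 : 0 ≤ x) (hx1 : x < 1) (n : ℕ) :
    ∑ c ∈ Finset.range n, x ^ c ≤ (1 - x)⁻¹ := by
  have hsum := tsum_geometric_of_lt_one hx0 hx1
  rw [← hsum]
  exact (summable_geometric_of_lt_one hx0 hx1).sum_le_tsum _ (fun c _ => by positivity)

lemma inv_one_sub_le_exp {x : ℝ} (hx0 : 0 ≤ x) (hx1 : x ≤ 5/6) :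
    (1 - x)⁻¹ ≤ Real.exp (6 * x) := by
  have h1 : (1 - x)⁻¹ ≤ 1 + 6 * x := by
    rw [inv_le_iff_one_le_mul₀ (by linarith)]
    nlinarith
  have h2 : 1 + 6 * x ≤ Real.exp (6 * x) := by
    have := Real.add_one_le_exp (6 * x)
    linarith
  linarith

/-- Key combinatorial bound: any finite sum of products over antitone sequences is
bounded by an Euler-type product bound. -/
lemma sum_prod_le (x : ℕ → ℝ) (hx0 : x 0 = 1) (hxnn : ∀ v, 0 ≤ x v)
    (hx56 : ∀ v, 1 ≤ v → x v ≤ 5/6) (A : ℝ)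
    (hA : ∀ V : ℕ, ∑ v ∈ Finset.range V, x (v+1) ≤ A)
    (S : Finset {l : Fin r → ℕ // Antitone l}) :
    ∑ l ∈ S, ∏ i, x (l.1 i) ≤ Real.exp (6 * A) := by
  classical
  set V : ℕ := S.sup (fun l => Finset.univ.sup l.1) with hV
  have hval : ∀ l ∈ S, ∀ i, l.1 i ≤ V := by
    intro l hl i
    exact le_trans (Finset.le_sup (Finset.mem_univ i))
      (Finset.le_sup (f := fun l : {l : Fin r → ℕ // Antitone l} => Finset.univ.sup l.1) hl)
  set cnt : {l : Fin r → ℕ // Antitone l} → ℕ → ℕ :=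
    fun l v => #(univ.filter fun i => l.1 i = v) with hcnt
  -- Step A : rewrite each product by fibers
  have stepA : ∀ l ∈ S, ∏ i, x (l.1 i) = ∏ v ∈ Finset.range V, x (v+1) ^ (cnt l (v+1)) := by
    intro l hl
    have h1 : ∏ i, x (l.1 i) = ∏ v ∈ Finset.range (V+1), ∏ i ∈ univ.filter (fun i => l.1 i = v), x (l.1 i) :=
      (Finset.prod_fiberwise_of_maps_to (fun i _ => Finset.mem_range.mpr (Nat.lt_succ_of_le (hval l hl i))) _).symm
    have h2 : ∀ v, ∏ i ∈ univ.filter (fun i => l.1 i = v), x (l.1 i) = x v ^ (cnt l v) := by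
      intro v
      rw [Finset.prod_congr rfl (fun i hi => by rw [(Finset.mem_filter.mp hi).2])]
      rw [Finset.prod_const]
    rw [h1, Finset.prod_congr rfl (fun v _ => h2 v)]
    rw [Finset.prod_range_succ' (fun v => x v ^ cnt l v) V]
    rw [hx0, one_pow, mul_one]
  -- the injection into tuples of counts
  set Ψ : {l : Fin r → ℕ // Antitone l} → (Fin V → Fin (r+1)) :=
    fun l v => ⟨cnt l (v.1+1), by
      have : cnt l (v.1+1) ≤ r := by
        have := Finset.card_filter_le (univ : Finset (Fin r)) (fun i => l.1 i = v.1+1)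
        simpa using this
      omega⟩ with hΨ
  have hinj : Set.InjOn Ψ S := by
    intro a ha b hb hab
    have hcnt_eq : ∀ v, 1 ≤ v → v ≤ V → cnt a v = cnt b v := by
      intro v hv1 hvV
      have := congrFun hab ⟨v - 1, by omega⟩
      have h' : cnt a (v-1+1) = cnt b (v-1+1) := congrArg Fin.val this
      rwa [Nat.sub_add_cancel hv1] at h'
    have := antitone_eq_of_cnt a.1 b.1 a.2 b.2 (hval a ha) (hval b hb) hcnt_eq
    exact Subtype.ext this
  -- compare with the full sum over tuples
  have step2 : ∑ l ∈ S, ∏ i, x (l.1 i) =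
      ∑ l ∈ S, ∏ v : Fin V, x (v.1+1) ^ ((Ψ l v) : ℕ) := by
    apply Finset.sum_congr rfl
    intro l hl
    rw [stepA l hl]
    rw [← Fin.prod_univ_eq_prod_range (fun v => x (v+1) ^ (cnt l (v+1))) V]
  have step3 : ∑ l ∈ S, ∏ v : Fin V, x (v.1+1) ^ ((Ψ l v) : ℕ) ≤
      ∑ m : Fin V → Fin (r+1), ∏ v : Fin V, x (v.1+1) ^ ((m v : ℕ)) := by
    rw [← Finset.sum_image (f := fun m : Fin V → Fin (r+1) => ∏ v : Fin V, x (v.1+1) ^ ((m v : ℕ)))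
      (g := Ψ) (fun a ha b hb hab => hinj ha hb hab)]
    apply Finset.sum_le_sum_of_subset_of_nonneg (Finset.subset_univ _)
    intro m _ _
    apply Finset.prod_nonneg
    intro v _
    exact pow_nonneg (hxnn _) _
  have step4 : ∑ m : Fin V → Fin (r+1), ∏ v : Fin V, x (v.1+1) ^ ((m v : ℕ)) =
      ∏ v : Fin V, ∑ c ∈ Finset.range (r+1), x (v.1+1) ^ c := by
    calc ∑ m : Fin V → Fin (r+1), ∏ v : Fin V, x (v.1+1) ^ ((m v : ℕ))
        = ∑ m ∈ Fintype.piFinset (fun _ : Fin V => (Finset.univ : Finset (Fin (r+1)))),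
            ∏ v : Fin V, x (v.1+1) ^ ((m v : ℕ)) := by rw [Fintype.piFinset_univ]
      _ = ∏ v : Fin V, ∑ c : Fin (r+1), x (v.1+1) ^ ((c : ℕ)) :=
          (Finset.prod_univ_sum (fun _ : Fin V => (Finset.univ : Finset (Fin (r+1))))
            (fun v c => x (v.1+1) ^ ((c : ℕ)))).symm
      _ = ∏ v : Fin V, ∑ c ∈ Finset.range (r+1), x (v.1+1) ^ c :=
          Finset.prod_congr rfl (fun v _ => Fin.sum_univ_eq_sum_range (fun c => x (v.1+1) ^ c) (r+1))
  have step5 : ∏ v : Fin V, ∑ c ∈ Finset.range (r+1), x (v.1+1) ^ c ≤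
      ∏ v : Fin V, Real.exp (6 * x (v.1+1)) := by
    apply Finset.prod_le_prod
    · intro v _
      apply Finset.sum_nonneg
      intro c _
      exact pow_nonneg (hxnn _) _
    · intro v _
      calc ∑ c ∈ Finset.range (r+1), x (v.1+1) ^ c
          ≤ (1 - x (v.1+1))⁻¹ := geom_fin_le (hxnn _) (lt_of_le_of_lt (hx56 _ (by omega)) (by norm_num)) _
        _ ≤ Real.exp (6 * x (v.1+1)) := inv_one_sub_le_exp (hxnn _) (hx56 _ (by omega))
  have step6 : ∏ v : Fin V, Real.exp (6 * x (v.1+1)) ≤ Real.exp (6 * A) := by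
    rw [← Real.exp_sum]
    apply Real.exp_le_exp.mpr
    rw [← Finset.mul_sum]
    apply mul_le_mul_of_nonneg_left _ (by norm_num : (0:ℝ) ≤ 6)
    calc ∑ v : Fin V, x (v.1+1) = ∑ v ∈ Finset.range V, x (v+1) :=
          Fin.sum_univ_eq_sum_range (fun v => x (v+1)) V
      _ ≤ A := hA V
  calc ∑ l ∈ S, ∏ i, x (l.1 i) = _ := step2
    _ ≤ _ := step3
    _ = _ := step4
    _ ≤ _ := step5
    _ ≤ _ := step6

end SumBound

section MinDim
open WittenAux Finset
variable {r : ℕ} {lam : Fin r → ℕ}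

lemma teles (m : ℕ) : ∏ e ∈ Finset.range m, (((e:ℝ)+2)/((e:ℝ)+1)) = (m:ℝ)+1 := by
  induction m with
  | zero => simp
  | succ n ih =>
    rw [Finset.prod_range_succ, ih]
    have h1 : ((n:ℝ)+1) ≠ 0 := by positivity
    push_cast
    field_simp
    ring

noncomputable def bfun (r : ℕ) : ℝ := min ((r:ℝ)/2) (Real.sqrt ((3/2:ℝ) ^ ((r+1)/2)))

lemma bfun_pos (hr : 1 ≤ r) : 0 < bfun r := by
  apply lt_min
  · have : (1:ℝ) ≤ (r:ℝ) := by exact_mod_cast hr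
    linarith
  · apply Real.sqrt_pos.mpr
    positivity

lemma min_dim (hr : 1 ≤ r) (hl : Antitone lam) (hne : lam ≠ (fun _ => 0)) :
    bfun r ≤ dimC r lam := by
  classical
  set T : Finset (Fin r) := Finset.univ.filter (fun i => 1 ≤ lam i) with hT
  set t : ℕ := T.card with ht
  have hdcT : ∀ ⦃i j : Fin r⦄, i ≤ j → j ∈ T → i ∈ T := by
    intro i j hij hj
    simp only [hT, Finset.mem_filter, Finset.mem_univ, true_and] at *
    exact le_trans hj (hl hij)
  have hmem : ∀ i : Fin r, 1 ≤ lam i ↔ (i:ℕ) < t := by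
    intro i
    have := mem_iff_lt_card T hdcT i
    simp only [hT, Finset.mem_filter, Finset.mem_univ, true_and] at this
    rw [← ht] at this
    exact this
  have ht1 : 1 ≤ t := by
    have hex : ∃ i, lam i ≠ 0 := by
      by_contra hcon
      push_neg at hcon
      exact hne (funext fun i => hcon i)
    obtain ⟨i, hi⟩ := hex
    have hiT : i ∈ T := by
      simp only [hT, Finset.mem_filter, Finset.mem_univ, true_and]
      omega
    have := Finset.card_pos.mpr ⟨i, hiT⟩
    omega
  have htr : t ≤ r := by
    have h1 := Finset.card_filter_le (Finset.univ : Finset (Fin r)) (fun i => 1 ≤ lam i)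
    simp only [Finset.card_univ, Fintype.card_fin] at h1
    rw [ht, hT]
    exact h1
  by_cases hc : 2*t ≤ r
  · -- use P1 ≥ r - t + 1 ≥ r/2
    apply le_trans (min_le_left _ _)
    set i0 : Fin r := ⟨t-1, by omega⟩ with hi0
    have hlam_i0 : 1 ≤ lam i0 := (hmem i0).mpr (by simp only [hi0]; omega)
    have hrow : ((r - t : ℕ):ℝ) + 1 ≤
        ∏ j ∈ Finset.Ioi i0, (((lam i0 : ℝ) - (lam j : ℝ) + ((j : ℕ) : ℝ) - ((i0 : ℕ) : ℝ)) /
          (((j : ℕ) : ℝ) - ((i0 : ℕ) : ℝ))) := by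
      have hprod : ∏ j ∈ Finset.Ioi i0,
          ((((j:ℕ):ℝ) - ((i0:ℕ):ℝ) + 1) / (((j:ℕ):ℝ) - ((i0:ℕ):ℝ)))
          = ((r - t : ℕ):ℝ) + 1 := by
        have heq := Finset.prod_nbij'
          (s := Finset.Ioi i0) (t := Finset.range (r-t))
          (f := fun a : Fin r => (((a:ℕ):ℝ) - ((i0:ℕ):ℝ) + 1) / (((a:ℕ):ℝ) - ((i0:ℕ):ℝ)))
          (g := fun e : ℕ => ((e:ℝ)+2)/((e:ℝ)+1))
          (fun a => (a:ℕ) - t)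
          (fun e => if h : t + e < r then (⟨t+e, h⟩ : Fin r) else i0)
          (by
            intro a ha
            simp only [Finset.mem_Ioi, Fin.lt_def, hi0] at ha
            simp only [Finset.mem_range]
            have := a.isLt
            omega)
          (by
            intro e he
            simp only [Finset.mem_range] at he
            have h' : t + e < r := by omega
            simp only [dif_pos h', Finset.mem_Ioi, Fin.lt_def, hi0]
            omega)
          (by
            intro a ha
            simp only [Finset.mem_Ioi, Fin.lt_def, hi0] at ha
            have h' : t + ((a:ℕ) - t) < r := by
              have := a.isLt
              omega
            simp only [dif_pos h']
            apply Fin.ext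
            simp only
            omega)
          (by
            intro e he
            simp only [Finset.mem_range] at he
            have h' : t + e < r := by omega
            simp only [dif_pos h']
            omega)
          (by
            intro a ha
            simp only [Finset.mem_Ioi, Fin.lt_def, hi0] at ha
            have ha' : t ≤ (a:ℕ) := by omega
            have hcast : ((i0:ℕ):ℝ) = (t:ℝ) - 1 := by
              simp only [hi0]
              rw [Nat.cast_sub ht1]
              norm_num
            have hcast2 : (((a:ℕ) - t : ℕ):ℝ) = ((a:ℕ):ℝ) - (t:ℝ) := by
              rw [Nat.cast_sub ha']
            rw [hcast, hcast2]
            ring_nf)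
        rw [heq, teles]
      rw [← hprod]
      apply Finset.prod_le_prod
      · intro j hj
        have hd := den1_pos (Finset.mem_Ioi.mp hj)
        positivity
      · intro j hj
        have hj' := Finset.mem_Ioi.mp hj
        have hd := den1_pos hj'
        have hlamj : lam j = 0 := by
          have hnot : ¬ ((j:ℕ) < t) := by
            simp only [Finset.mem_Ioi, Fin.lt_def, hi0] at hj
            omega
          have := hmem j
          omega
        have hnum : ((j:ℕ):ℝ) - ((i0:ℕ):ℝ) + 1 ≤
            (lam i0 : ℝ) - (lam j : ℝ) + ((j:ℕ):ℝ) - ((i0:ℕ):ℝ) := by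
          have h1 : (1:ℝ) ≤ (lam i0 : ℝ) := by exact_mod_cast hlam_i0
          rw [hlamj]
          push_cast
          linarith
        rw [div_le_div_iff₀ hd hd]
        nlinarith [mul_le_mul_of_nonneg_right hnum hd.le]
    have hp1 : ((r - t : ℕ):ℝ) + 1 ≤ p1 r lam := by
      apply le_trans hrow
      unfold p1
      apply single_le_prod_aux (Finset.univ) (fun i => ∏ j ∈ Finset.Ioi i,
        (((lam i : ℝ) - (lam j : ℝ) + ((j : ℕ) : ℝ) - ((i : ℕ) : ℝ)) /
          (((j : ℕ) : ℝ) - ((i : ℕ) : ℝ))))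
        (fun i _ => one_le_prod_aux _ _ (fun j hj => fac1_ge_one hl (Finset.mem_Ioi.mp hj)))
        (Finset.mem_univ i0)
    have hdim : p1 r lam ≤ dimC r lam := by
      rw [dimC_eq]
      calc p1 r lam = p1 r lam * 1 := by ring
      _ ≤ p1 r lam * p2 r lam :=
          mul_le_mul_of_nonneg_left one_le_p2 (p1_pos hl).le
    have hhalf : (r:ℝ)/2 ≤ ((r - t : ℕ):ℝ) + 1 := by
      rw [Nat.cast_sub htr]
      have h2t : (2*t : ℝ) ≤ (r:ℝ) := by exact_mod_cast hc
      have h2t' : (1:ℝ) ≤ (t:ℝ) := by exact_mod_cast ht1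
      linarith
    linarith
  · -- use P2 squared
    apply le_trans (min_le_right _ _)
    have ht2 : (r+1)/2 ≤ t := by omega
    have h32 : (3/2:ℝ) ^ ((r+1)/2) ≤ (3/2:ℝ)^t := pow_le_pow_right₀ (by norm_num) ht2
    have hWt : (3/2:ℝ)^t ≤ WittenAux.W r lam := by
      have hle : ∏ i : Fin r, (if 1 ≤ lam i then (3/2:ℝ) else 1) ≤ WittenAux.W r lam := by
        unfold WittenAux.W
        apply Finset.prod_le_prod
        · intro i _; split <;> norm_num
        · intro i _
          by_cases h : 1 ≤ lam i
          · simp only [h, if_true]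
            exact base_ge_32 hr h
          · simp only [h, if_false]
            have h0 : lam i = 0 := by omega
            rw [h0]
            norm_num
      have heq : ∏ i : Fin r, (if 1 ≤ lam i then (3/2:ℝ) else 1) = (3/2:ℝ)^t := by
        rw [Finset.prod_ite (fun _ => (3/2:ℝ)) (fun _ => (1:ℝ))]
        rw [Finset.prod_const, Finset.prod_const, one_pow, mul_one]
      rw [← heq]
      exact hle
    have h1 : (3/2:ℝ)^((r+1)/2) ≤ (dimC r lam)^2 :=
      le_trans (le_trans h32 hWt) (dimC_sq_ge hl)
    calc Real.sqrt ((3/2:ℝ)^((r+1)/2)) ≤ Real.sqrt ((dimC r lam)^2) := Real.sqrt_le_sqrt h1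
    _ = dimC r lam := Real.sqrt_sq (dimC_pos hl).le

end MinDim

section Final
open WittenAux Finset Filter

noncomputable def Zc (σ : ℝ) : ℝ := ∑' n : ℕ, ((n:ℝ)+1) ^ (-σ)

lemma summable_shift {σ : ℝ} (hσ : 1 < σ) : Summable (fun n : ℕ => ((n:ℝ)+1) ^ (-σ)) := by
  have h0 : Summable (fun n : ℕ => (n:ℝ) ^ (-σ)) := Real.summable_nat_rpow.mpr (by linarith)
  have h1 := (_root_.summable_nat_add_iff (f := fun n : ℕ => (n:ℝ) ^ (-σ)) 1).mpr h0
  apply h1.congr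
  intro n
  push_cast
  rfl

noncomputable def Mc (σ : ℝ) : ℝ := Real.exp (6 * ((8:ℝ)^(σ/2) * Zc σ))

lemma hA_bound {r : ℕ} (hr : 1 ≤ r) {σ : ℝ} (hσ : 1 < σ) (V : ℕ) :
    ∑ v ∈ Finset.range V, xF r σ (v+1) ≤ (8:ℝ)^(σ/2) * Zc σ := by
  have hterm : ∀ v ∈ Finset.range V, xF r σ (v+1) ≤ (8:ℝ)^(σ/2) * ((v:ℝ)+1) ^ (-σ) := by
    intro v _
    have := xF_decay hr (by linarith : (0:ℝ) < σ) (v := v+1) (by omega)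
    calc xF r σ (v+1) ≤ (8:ℝ)^(σ/2) * ((v+1:ℕ):ℝ) ^ (-σ) := this
    _ = (8:ℝ)^(σ/2) * ((v:ℝ)+1) ^ (-σ) := by push_cast; ring_nf
  calc ∑ v ∈ Finset.range V, xF r σ (v+1)
      ≤ ∑ v ∈ Finset.range V, (8:ℝ)^(σ/2) * ((v:ℝ)+1) ^ (-σ) := Finset.sum_le_sum hterm
  _ = (8:ℝ)^(σ/2) * ∑ v ∈ Finset.range V, ((v:ℝ)+1) ^ (-σ) := by rw [Finset.mul_sum]
  _ ≤ (8:ℝ)^(σ/2) * Zc σ := by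
      apply mul_le_mul_of_nonneg_left _ (Real.rpow_nonneg (by norm_num) _)
      exact (summable_shift hσ).sum_le_tsum _ (fun n _ => Real.rpow_nonneg (by positivity) _)

lemma master_sum_le {r : ℕ} (hr : 1 ≤ r) {σ : ℝ} (hσ : 1 < σ)
    (S : Finset {l : Fin r → ℕ // Antitone l}) :
    ∑ l ∈ S, ∏ i, xF r σ (l.1 i) ≤ Mc σ :=
  sum_prod_le (xF r σ) (xF_zero σ) (fun v => xF_nonneg σ v)
    (fun v hv => xF_le_56 hr hσ.le hv) _ (fun V => hA_bound hr hσ V) S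

lemma summable_xFprod {r : ℕ} (hr : 1 ≤ r) {σ : ℝ} (hσ : 1 < σ) :
    Summable (fun l : {l : Fin r → ℕ // Antitone l} => ∏ i, xF r σ (l.1 i)) :=
  summable_of_sum_le (fun l => Finset.prod_nonneg (fun i _ => xF_nonneg σ _))
    (fun u => master_sum_le hr hσ u)

lemma tsum_xFprod_le {r : ℕ} (hr : 1 ≤ r) {σ : ℝ} (hσ : 1 < σ) :
    ∑' l : {l : Fin r → ℕ // Antitone l}, ∏ i, xF r σ (l.1 i) ≤ Mc σ :=
  Summable.tsum_le_of_sum_le (summable_xFprod hr hσ) (fun u => master_sum_le hr hσ u)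

lemma summable_dim {r : ℕ} (hr : 1 ≤ r) {σ : ℝ} (hσ : 1 < σ) :
    Summable (fun l : {l : Fin r → ℕ // Antitone l} => dimC r l.1 ^ (-σ)) := by
  apply summable_of_sum_le (c := Mc σ)
  · intro l
    exact Real.rpow_nonneg (dimC_pos l.2).le _
  · intro u
    calc ∑ l ∈ u, dimC r l.1 ^ (-σ)
        ≤ ∑ l ∈ u, ∏ i, xF r σ (l.1 i) :=
          Finset.sum_le_sum (fun l _ => dimC_rpow_le hr l.2 (by linarith))
    _ ≤ Mc σ := master_sum_le hr hσ u

end Final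

section Limit
open WittenAux Finset Filter

variable {s : ℝ}

/-- the distinguished zero weight -/
def zw (r : ℕ) : {l : Fin r → ℕ // Antitone l} := ⟨fun _ => 0, antitone_const⟩

noncomputable def Etail (s : ℝ) (r : ℕ) : ℝ :=
  ∑' l : {l : Fin r → ℕ // Antitone l},
    (if l = zw r then 0 else dimC r l.1 ^ (-s))

lemma Etail_nonneg (hs : 1 < s) {r : ℕ} (hr : 1 ≤ r) : 0 ≤ Etail s r := by
  apply tsum_nonneg
  intro l
  split
  · exact le_refl 0
  · exact Real.rpow_nonneg (dimC_pos l.2).le _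

lemma summable_ite {r : ℕ} (hr : 1 ≤ r) (hs : 1 < s) :
    Summable (fun l : {l : Fin r → ℕ // Antitone l} =>
      (if l = zw r then 0 else dimC r l.1 ^ (-s))) := by
  apply summable_of_sum_le (c := Mc s)
  · intro l
    rw [Pi.zero_apply]
    dsimp only
    split
    · exact le_refl 0
    · exact Real.rpow_nonneg (dimC_pos l.2).le _
  · intro u
    calc ∑ l ∈ u, (if l = zw r then 0 else dimC r l.1 ^ (-s))
        ≤ ∑ l ∈ u, ∏ i, xF r s (l.1 i) := by
          apply Finset.sum_le_sum
          intro l _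
          split
          · exact Finset.prod_nonneg (fun i _ => xF_nonneg s _)
          · exact dimC_rpow_le hr l.2 (by linarith)
    _ ≤ Mc s := master_sum_le hr hs u

lemma tsum_split (hs : 1 < s) {r : ℕ} (hr : 1 ≤ r) :
    ∑' l : {l : Fin r → ℕ // Antitone l}, dimC r l.1 ^ (-s) = 1 + Etail s r := by
  classical
  have h := Summable.tsum_eq_add_tsum_ite (summable_dim hr hs) (zw r)
  rw [h]
  congr 1
  show dimC r (fun _ => 0) ^ (-s) = 1
  rw [dimC_zero, Real.one_rpow]

lemma Etail_le (hs : 1 < s) {r : ℕ} (hr : 1 ≤ r) :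
    Etail s r ≤ (bfun r) ^ (-((s-1)/2)) * Mc ((s+1)/2) := by
  set s' : ℝ := (s+1)/2 with hs'
  have hs'1 : 1 < s' := by rw [hs']; linarith
  set c : ℝ := (s-1)/2 with hc
  have hc0 : 0 < c := by rw [hc]; linarith
  have hterm : ∀ l : {l : Fin r → ℕ // Antitone l},
      (if l = zw r then 0 else dimC r l.1 ^ (-s)) ≤
        (bfun r) ^ (-c) * ∏ i, xF r s' (l.1 i) := by
    intro l
    split
    · exact mul_nonneg (Real.rpow_nonneg (bfun_pos hr).le _)
        (Finset.prod_nonneg (fun i _ => xF_nonneg _ _))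
    · next hne =>
      have hlne : l.1 ≠ (fun _ => 0) := fun h => hne (Subtype.ext h)
      have hd := dimC_pos l.2
      have hsplit : dimC r l.1 ^ (-s) = dimC r l.1 ^ (-c) * dimC r l.1 ^ (-s') := by
        rw [← Real.rpow_add hd]
        congr 1
        rw [hc, hs']
        ring
      rw [hsplit]
      apply mul_le_mul
      · exact Real.rpow_le_rpow_of_nonpos (bfun_pos hr) (min_dim hr l.2 hlne) (by linarith)
      · exact dimC_rpow_le hr l.2 (by linarith)
      · exact Real.rpow_nonneg hd.le _
      · exact Real.rpow_nonneg (bfun_pos hr).le _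
  calc Etail s r ≤ ∑' l : {l : Fin r → ℕ // Antitone l},
        (bfun r) ^ (-c) * ∏ i, xF r s' (l.1 i) := by
        apply Summable.tsum_le_tsum hterm (summable_ite hr hs)
        exact (summable_xFprod hr hs'1).mul_left _
  _ = (bfun r) ^ (-c) * ∑' l : {l : Fin r → ℕ // Antitone l}, ∏ i, xF r s' (l.1 i) :=
        tsum_mul_left
  _ ≤ (bfun r) ^ (-c) * Mc s' := by
        apply mul_le_mul_of_nonneg_left (tsum_xFprod_le hr hs'1)
          (Real.rpow_nonneg (bfun_pos hr).le _)

lemma tendsto_bfun : Tendsto bfun atTop atTop := by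
  have h1 : Tendsto (fun r : ℕ => (r:ℝ)/2) atTop atTop :=
    Tendsto.atTop_div_const (by norm_num) tendsto_natCast_atTop_atTop
  have h2 : Tendsto (fun r : ℕ => Real.sqrt ((3/2:ℝ) ^ ((r+1)/2))) atTop atTop := by
    have hk : Tendsto (fun r : ℕ => (r+1)/2) atTop atTop :=
      tendsto_atTop_atTop.mpr (fun b => ⟨2*b, fun a ha => by omega⟩)
    have hpow : Tendsto (fun k : ℕ => (3/2:ℝ)^k) atTop atTop :=
      tendsto_pow_atTop_atTop_of_one_lt (by norm_num)
    have hsqrt : Tendsto Real.sqrt atTop atTop := by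
      have := (tendsto_rpow_atTop (by norm_num : (0:ℝ) < 1/2))
      apply this.congr'
      filter_upwards with x
      rw [← Real.sqrt_eq_rpow]
    exact hsqrt.comp (hpow.comp hk)
  rw [tendsto_atTop] at h1 h2 ⊢
  intro b
  filter_upwards [h1 b, h2 b] with r hr1 hr2
  exact le_min hr1 hr2

lemma tendsto_bound (hs : 1 < s) :
    Tendsto (fun r : ℕ => (bfun r) ^ (-((s-1)/2)) * Mc ((s+1)/2)) atTop (nhds 0) := by
  have hc0 : (0:ℝ) < (s-1)/2 := by linarith
  have h1 : Tendsto (fun r : ℕ => (bfun r) ^ ((s-1)/2)) atTop atTop :=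
    (tendsto_rpow_atTop hc0).comp tendsto_bfun
  have h2 : Tendsto (fun r : ℕ => ((bfun r) ^ ((s-1)/2))⁻¹) atTop (nhds 0) :=
    h1.inv_tendsto_atTop
  have h3 : Tendsto (fun r : ℕ => (bfun r) ^ (-((s-1)/2))) atTop (nhds 0) := by
    apply h2.congr'
    filter_upwards [eventually_ge_atTop 1] with r hr
    rw [← Real.rpow_neg (bfun_pos hr).le]
  have := h3.mul_const (Mc ((s+1)/2))
  simpa using this

end Limit

/-- The Witten zeta function of type `C_r`: for every real `s > 1`,
`ζ_{C_r}(s) = Σ_{λ ∈ Λ_r^C} (d_λ^C)^{-s}` converges for every `r ≥ 1`, and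
`ζ_{C_r}(s) → 1` as `r → ∞`. -/
theorem witten_zeta_limit_C (s : ℝ) (hs : 1 < s) :
    (∀ r : ℕ, 1 ≤ r →
      Summable fun lam : {l : Fin r → ℕ // Antitone l} => dimC r lam.1 ^ (-s)) ∧
    Tendsto
      (fun r : ℕ => ∑' lam : {l : Fin r → ℕ // Antitone l}, dimC r lam.1 ^ (-s))
      atTop (nhds 1) := by
  constructor
  · intro r hr
    exact summable_dim hr hs
  · have hE : Tendsto (Etail s) atTop (nhds 0) := by
      apply squeeze_zero'
      · filter_upwards [eventually_ge_atTop 1] with r hr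
        exact Etail_nonneg hs hr
      · filter_upwards [eventually_ge_atTop 1] with r hr
        exact Etail_le hs hr
      · exact tendsto_bound hs
    have h1 : Tendsto (fun r : ℕ => 1 + Etail s r) atTop (nhds 1) := by
      have := (tendsto_const_nhds (x := (1:ℝ)) (f := (atTop : Filter ℕ))).add hE
      simpa using this
    apply h1.congr'
    filter_upwards [eventually_ge_atTop 1] with r hr
    exact (tsum_split hs hr).symm
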